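/- Let n ≥ 2 be an integer and L > 0. The function t ↦ ( ∏_{i=1}^{n−1} t_i^{−1/2} ) · t_n^{−1} is Lebesgue integrable on the simplex Δⁿ(0,L) = { t ∈ ℝⁿ : 0 < t₁ ≤ t₂ ≤ ⋯ ≤ t_n ≤ L }, and its integral is at most (2ⁿ/(n−1)) · L^{(n−1)/2}. -/

import Mathlib

/-!
Integrating out the coordinates of the ordered simplex one at a time, starting from the last,
gives the Dirichlet-type formula
`∫_{Δᵏ⁺¹(T)} ∏_{i<k} tᵢ^p · t_k^q dt = T^(k(p+1)+q+1) / ((p+1)^k · k! · (k(p+1)+q+1))`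
for `p > -1` and `k(p+1) + q > -1`. For `p = -1/2`, `q = -1` and `n = k + 1 ≥ 2` this equals
`2ⁿ L^((n-1)/2) / ((n-1) · (n-1)!)`, and `(n-1)! ≥ 1`. The computation is done
with lower Lebesgue integrals, so that integrability follows from the finiteness of the result.
-/

open MeasureTheory Real Set
open scoped ENNReal Nat

theorem integrable_and_integral_eq_of_lintegral_ofReal_eq {α : Type*}
    [MeasurableSpace α] {μ : Measure α} {f : α → ℝ} (hfm : AEStronglyMeasurable f μ)
    (hf : 0 ≤ᵐ[μ] f) {c : ℝ} (hc : 0 ≤ c) (h : ∫⁻ a, ENNReal.ofReal (f a) ∂μ = ENNReal.ofReal c) :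
    Integrable f μ ∧ ∫ a, f a ∂μ = c :=
  ⟨(lintegral_ofReal_ne_top_iff_integrable hfm hf).1 (h ▸ ENNReal.ofReal_ne_top), by
    rw [integral_eq_lintegral_of_nonneg_ae hf hfm, h, ENNReal.toReal_ofReal hc]⟩

def orderedSimplex (k : ℕ) (T : ℝ) : Set (Fin k → ℝ) :=
  {t | (∀ i, 0 < t i) ∧ (∀ i j : Fin k, i ≤ j → t i ≤ t j) ∧ ∀ i, t i ≤ T}

theorem measurableSet_orderedSimplex (k : ℕ) (T : ℝ) : MeasurableSet (orderedSimplex k T) :=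
  measurableSet_setOfPred.2 (by fun_prop)

theorem snoc_mem_orderedSimplex_iff {k : ℕ} {T s : ℝ} {u : Fin k → ℝ} :
    (Fin.snoc u s : Fin (k + 1) → ℝ) ∈ orderedSimplex (k + 1) T ↔
      s ∈ Ioc 0 T ∧ u ∈ orderedSimplex k s := by
  simp only [orderedSimplex, Fin.forall_fin_succ', forall_and, Fin.castSucc_le_castSucc_iff,
    Fin.last_le_iff, Fin.castSucc_ne_last, IsEmpty.forall_iff, implies_true, and_true,
    le_refl, mem_ofPred_eq, Fin.snoc_castSucc, Fin.snoc_last, mem_Ioc]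
  grind

theorem lintegral_orderedSimplex_succ (k : ℕ) (T : ℝ) {F : (Fin (k + 1) → ℝ) → ℝ≥0∞}
    (hF : Measurable F) :
    ∫⁻ t in orderedSimplex (k + 1) T, F t =
      ∫⁻ s in Ioc 0 T, ∫⁻ u in orderedSimplex k s, F (Fin.snoc u s) := by
  have he := (volume_preserving_piFinSuccAbove (fun _ : Fin (k + 1) => ℝ) (Fin.last k)).symm
  rw [← lintegral_indicator (measurableSet_orderedSimplex _ _),
    ← he.lintegral_comp_emb (MeasurableEquiv.measurableEmbedding _), Measure.volume_eq_prod,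
    lintegral_prod _ (by exact ((hF.indicator (measurableSet_orderedSimplex _ _)).comp
      (MeasurableEquiv.measurable _)).aemeasurable), ← lintegral_indicator measurableSet_Ioc]
  congr 1 with s
  simp only [MeasurableEquiv.piFinSuccAbove_symm_apply, Fin.insertNthEquiv, Equiv.coe_fn_mk,
    Fin.insertNth_last']
  classical
  by_cases hs : s ∈ Ioc 0 T
  · rw [indicator_of_mem hs, ← lintegral_indicator (measurableSet_orderedSimplex _ _)]
    congr with u
    simp only [indicator_apply, snoc_mem_orderedSimplex_iff, hs, true_and]
  · simp [snoc_mem_orderedSimplex_iff, hs]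

theorem lintegral_orderedSimplex_succ_prod_mul (k : ℕ) (T : ℝ) {f g : ℝ → ℝ≥0∞}
    (hf : Measurable f) (hg : Measurable g) :
    ∫⁻ t in orderedSimplex (k + 1) T, (∏ i : Fin k, f (t i.castSucc)) * g (t (Fin.last k)) =
      ∫⁻ s in Ioc 0 T, (∫⁻ u in orderedSimplex k s, ∏ i, f (u i)) * g s := by
  rw [lintegral_orderedSimplex_succ _ _ (by fun_prop)]
  simp only [Fin.snoc_castSucc, Fin.snoc_last]
  congr 1 with s
  exact lintegral_mul_const _ (by fun_prop)

theorem lintegral_Ioc_rpow {p : ℝ} (hp : -1 < p) {T : ℝ} (hT : 0 ≤ T) :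
    ∫⁻ s in Ioc 0 T, ENNReal.ofReal (s ^ p) = ENNReal.ofReal (T ^ (p + 1) / (p + 1)) := by
  have hint : IntegrableOn (fun s : ℝ => s ^ p) (Ioc 0 T) := by
    rw [← intervalIntegrable_iff_integrableOn_Ioc_of_le hT]
    exact intervalIntegral.intervalIntegrable_rpow' hp
  have hnonneg : 0 ≤ᵐ[volume.restrict (Ioc 0 T)] fun s : ℝ => s ^ p := by
    filter_upwards [self_mem_ae_restrict measurableSet_Ioc] with s hs
    exact rpow_nonneg hs.1.le p
  rw [← ofReal_integral_eq_lintegral_ofReal hint hnonneg, ← intervalIntegral.integral_of_le hT,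
    integral_rpow (Or.inl hp), zero_rpow (by linarith), sub_zero]

theorem lintegral_Ioc_rpow_div_mul_rpow {a b c : ℝ} (hab : -1 < a + b) (hc : 0 < c)
    {T : ℝ} (hT : 0 ≤ T) :
    ∫⁻ s in Ioc 0 T, ENNReal.ofReal (s ^ a / c) * ENNReal.ofReal (s ^ b) =
      ENNReal.ofReal (T ^ (a + b + 1) / (c * (a + b + 1))) := by
  have hpow : ∀ s ∈ Ioc (0 : ℝ) T, ENNReal.ofReal (s ^ a / c) * ENNReal.ofReal (s ^ b) =
      ENNReal.ofReal c⁻¹ * ENNReal.ofReal (s ^ (a + b)) := fun s hs => by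
    rw [← ENNReal.ofReal_mul (by have := rpow_nonneg hs.1.le a; positivity),
      ← ENNReal.ofReal_mul (by positivity), rpow_add hs.1]
    ring_nf
  rw [setLIntegral_congr_fun measurableSet_Ioc hpow, lintegral_const_mul _ (by fun_prop),
    lintegral_Ioc_rpow hab hT, ← ENNReal.ofReal_mul (by positivity)]
  congr 1
  field_simp

theorem lintegral_orderedSimplex_prod_rpow {p : ℝ} (hp : -1 < p) (k : ℕ) {T : ℝ} (hT : 0 < T) :
    ∫⁻ u in orderedSimplex k T, ∏ i, ENNReal.ofReal (u i ^ p) =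
      ENNReal.ofReal (T ^ (k * (p + 1)) / ((p + 1) ^ k * k !)) := by
  have hp1 : 0 < p + 1 := by linarith
  induction k generalizing T with
  | zero =>
    simp [orderedSimplex, volume_pi]
  | succ k ih =>
    simp only [Fin.prod_univ_castSucc]
    rw [lintegral_orderedSimplex_succ_prod_mul (f := fun s => ENNReal.ofReal (s ^ p))
        (g := fun s => ENNReal.ofReal (s ^ p)) _ _ (by fun_prop) (by fun_prop),
      setLIntegral_congr_fun measurableSet_Ioc fun s hs => by rw [ih hs.1],
      lintegral_Ioc_rpow_div_mul_rpow (by nlinarith [k.cast_nonneg (α := ℝ)]) (by positivity) hT.le]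
    congr 1
    push_cast [Nat.factorial_succ]
    ring_nf

theorem lintegral_orderedSimplex_prod_rpow_mul_rpow {p q : ℝ} (hp : -1 < p) (k : ℕ)
    (hq : -1 < k * (p + 1) + q) {T : ℝ} (hT : 0 < T) :
    ∫⁻ t in orderedSimplex (k + 1) T,
        (∏ i : Fin k, ENNReal.ofReal (t i.castSucc ^ p)) * ENNReal.ofReal (t (Fin.last k) ^ q) =
      ENNReal.ofReal (T ^ (k * (p + 1) + q + 1) / ((p + 1) ^ k * k ! * (k * (p + 1) + q + 1))) := by
  have hp1 : 0 < p + 1 := by linarith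
  rw [lintegral_orderedSimplex_succ_prod_mul (f := fun s => ENNReal.ofReal (s ^ p))
      (g := fun s => ENNReal.ofReal (s ^ q)) _ _ (by fun_prop) (by fun_prop),
    setLIntegral_congr_fun measurableSet_Ioc fun s hs => by
      rw [lintegral_orderedSimplex_prod_rpow hp k hs.1],
    lintegral_Ioc_rpow_div_mul_rpow hq (by positivity) hT.le]

theorem lintegral_orderedSimplex_prod_rpow_neg_half_mul_inv {k : ℕ} (hk : 1 ≤ k) {L : ℝ}
    (hL : 0 < L) :
    ∫⁻ t in orderedSimplex (k + 1) L,
        ENNReal.ofReal ((∏ i : Fin k, t i.castSucc ^ (-(1 : ℝ) / 2)) * (t (Fin.last k))⁻¹) =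
      ENNReal.ofReal (2 ^ (k + 1) / (k * k !) * L ^ ((k : ℝ) / 2)) := by
  have hk' : (1 : ℝ) ≤ k := by exact_mod_cast hk
  rw [setLIntegral_congr_fun (measurableSet_orderedSimplex _ _) fun t ht => by
      rw [ENNReal.ofReal_mul (Finset.prod_nonneg fun i _ => rpow_nonneg (ht.1 _).le _),
        ENNReal.ofReal_prod_of_nonneg fun i _ => rpow_nonneg (ht.1 _).le _, ← rpow_neg_one],
    lintegral_orderedSimplex_prod_rpow_mul_rpow (by norm_num) k (by linarith) hL]
  congr 1
  rw [show (-1 / 2 + 1 : ℝ) = 2⁻¹ by norm_num, show (k : ℝ) * 2⁻¹ + -1 + 1 = k / 2 by ring,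
    inv_pow]
  field_simp
  ring

/-- For `n ≥ 2` and `L > 0`, the function `t ↦ (∏_{i=1}^{n-1} t_i^{-1/2}) · t_n⁻¹` is
Lebesgue integrable on the ordered simplex `Δⁿ(0,L) = {t : 0 < t₁ ≤ ⋯ ≤ t_n ≤ L}`, and
its integral is at most `(2ⁿ/(n-1)) · L^{(n-1)/2}`. -/
theorem stmt10 (n : ℕ) (hn : 2 ≤ n) (L : ℝ) (hL : 0 < L) :
    MeasureTheory.IntegrableOn
        (fun t : Fin n → ℝ =>
          (∏ i : Fin (n - 1), (t (Fin.castLE (Nat.sub_le n 1) i)) ^ (-(1 : ℝ) / 2)) *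
            (t ⟨n - 1, by omega⟩)⁻¹)
        {t : Fin n → ℝ |
          (∀ i, 0 < t i) ∧ (∀ i j : Fin n, i ≤ j → t i ≤ t j) ∧ ∀ i, t i ≤ L} ∧
      ∫ t in {t : Fin n → ℝ |
            (∀ i, 0 < t i) ∧ (∀ i j : Fin n, i ≤ j → t i ≤ t j) ∧ ∀ i, t i ≤ L},
          (∏ i : Fin (n - 1), (t (Fin.castLE (Nat.sub_le n 1) i)) ^ (-(1 : ℝ) / 2)) *
            (t ⟨n - 1, by omega⟩)⁻¹
        ≤ (2 ^ n / ((n : ℝ) - 1)) * L ^ (((n : ℝ) - 1) / 2) := by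
  obtain ⟨k, rfl⟩ : ∃ k, n = k + 1 := ⟨n - 1, by omega⟩
  have hk : 1 ≤ k := by omega
  have hf_nonneg : ∀ t ∈ orderedSimplex (k + 1) L,
      0 ≤ (∏ i : Fin k, t i.castSucc ^ (-(1 : ℝ) / 2)) * (t (Fin.last k))⁻¹ := fun t ht =>
    mul_nonneg (Finset.prod_nonneg fun i _ => rpow_nonneg (ht.1 _).le _) (inv_nonneg.2 (ht.1 _).le)
  obtain ⟨hint, heq⟩ := integrable_and_integral_eq_of_lintegral_ofReal_eq
    (by fun_prop) (ae_restrict_of_forall_mem (measurableSet_orderedSimplex _ _) hf_nonneg)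
    (by positivity) (lintegral_orderedSimplex_prod_rpow_neg_half_mul_inv hk hL)
  -- for `n = k + 1`, the statement's `Fin (n - 1)`, `Fin.castLE` and `⟨n - 1, _⟩` are
  -- definitionally `Fin k`, `Fin.castSucc` and `Fin.last k`
  refine ⟨hint, heq.trans_le ?_⟩
  push_cast
  simp only [add_sub_cancel_right]
  gcongr
  exact le_mul_of_one_le_right (Nat.cast_nonneg k) (Nat.one_le_cast.2 k.factorial_pos)
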